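/- Let X be a compact metric space which admits a finite cover by open sets U_1, ..., U_m such that each U_i (with the subspace topology) is contractible. Then there exists a real number delta > 0 such that every loop in X whose length is at most delta is nullhomotopic. (In other words, the homotopy 1-systole of X is positive: no noncontractible loop has length below delta.) -/
import Mathlib

/-- **Positivity of the homotopy 1-systole** (Proposition 6.1 of the paper,
homotopy 1-systole case).  Let `X` be a compact metric space admitting a
finite open cover `U 0, …, U (m-1)` by contractible subsets.  Then there is
`δ > 0` such that every loop in `X` of length (total variation) at most `δ`
is nullhomotopic. -/
theorem positivity_of_homotopy_one_systole
    {X : Type*} [MetricSpace X] [CompactSpace X]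
    {m : ℕ} (U : Fin m → Set X)
    (hopen : ∀ i, IsOpen (U i))
    (hcover : (⋃ i, U i) = Set.univ)
    (hcontr : ∀ i, ContractibleSpace (U i)) :
    ∃ δ : ℝ, 0 < δ ∧ ∀ (x₀ : X) (γ : Path x₀ x₀),
      eVariationOn (⇑γ) Set.univ ≤ ENNReal.ofReal δ →
      γ.Homotopic (Path.refl x₀) := by
  obtain ⟨δ, hδ, hball⟩ := lebesgue_number_lemma_of_metric isCompact_univ hopen
    (by rw [hcover])
  refine ⟨δ / 2, by linarith, fun x₀ γ hlen => ?_⟩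
  obtain ⟨i, hi⟩ := hball x₀ (Set.mem_univ _)
  -- every point of the loop lies in `ball x₀ δ ⊆ U i`
  have hmem : ∀ t : unitInterval, γ t ∈ U i := by
    intro t
    apply hi
    have h1 : edist (γ t) (γ 0) ≤ eVariationOn (⇑γ) Set.univ :=
      eVariationOn.edist_le _ (Set.mem_univ _) (Set.mem_univ _)
    have h2 : edist (γ t) x₀ ≤ ENNReal.ofReal (δ / 2) := by
      simpa using h1.trans hlen
    have h3 : dist (γ t) x₀ ≤ δ / 2 := by
      rw [edist_dist] at h2
      exact (ENNReal.ofReal_le_ofReal_iff (by linarith)).mp h2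
    rw [Metric.mem_ball]; calc dist (γ t) x₀ ≤ δ / 2 := h3
      _ < δ := by linarith
  have hx₀ : x₀ ∈ U i := hi (Metric.mem_ball_self hδ)
  -- lift the loop to `U i`
  let γ' : Path (⟨x₀, hx₀⟩ : U i) ⟨x₀, hx₀⟩ :=
    { toFun := fun t => ⟨γ t, hmem t⟩
      continuous_toFun := γ.continuous.subtype_mk _
      source' := by ext; simp
      target' := by ext; simp }
  have := hcontr i
  have hhom : γ'.Homotopic (Path.refl (⟨x₀, hx₀⟩ : U i)) :=
    @SimplyConnectedSpace.paths_homotopic _ _ inferInstance _ _ _ _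
  have hmap := hhom.map (⟨Subtype.val, continuous_subtype_val⟩ : C(U i, X))
  have e1 : γ'.map continuous_subtype_val = γ := by
    ext t; rfl
  have e2 : (Path.refl (⟨x₀, hx₀⟩ : U i)).map continuous_subtype_val = Path.refl x₀ := by
    ext t; rfl
  rwa [e1, e2] at hmap
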